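/- arXiv:2212.13989 — 2 statements merged into one kernel-verified Lean document; each statement's English description precedes it below -/
import Mathlib

section
/- Let F : Finset α → ℝ be a monotone nondecreasing set function with F(∅) = 0 that is γ-weakly submodular for some γ ∈ (0,1], meaning for all disjoint sets S and T, γ · (F(S ∪ T) - F(S)) ≤ Σ_{a ∈ T} (F(S ∪ {a}) - F(S)). Then greedy selection of k elements, each maximizing the marginal gain, yields a set G_k with F(G_k) ≥ (1 - e^{-γ}) · F(OPT_k), where OPT_k is any set of size at most k. -/
theorem stmt2 {α : Type*} [Fintype α] [DecidableEq α]
    (F : Finset α → ℝ) (γ : ℝ) (hγ0 : 0 < γ) (hγ1 : γ ≤ 1)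
    (hmono : ∀ S T : Finset α, S ⊆ T → F S ≤ F T)
    (hempty : F ∅ = 0)
    (hwsub : ∀ S T : Finset α, Disjoint S T →
      γ * (F (S ∪ T) - F S) ≤ ∑ a ∈ T, (F (S ∪ {a}) - F S))
    (G : ℕ → Finset α) (hG0 : G 0 = ∅)
    (hgreedy : ∀ t : ℕ, ∃ a : α, G (t + 1) = insert a (G t) ∧
      ∀ b : α, F (insert b (G t)) ≤ F (insert a (G t)))
    (k : ℕ) (OPT : Finset α) (hOPT : OPT.card ≤ k) :
    (1 - Real.exp (-γ)) * F OPT ≤ F (G k) := by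
  have hFOPT : 0 ≤ F OPT := by
    have := hmono ∅ OPT (Finset.empty_subset _); linarith
  rcases Nat.eq_zero_or_pos k with hk | hk
  · subst hk
    have hO : OPT = ∅ := Finset.card_eq_zero.mp (Nat.le_zero.mp hOPT)
    simp [hO, hempty, hG0]
  · have hk' : (0:ℝ) < k := by exact_mod_cast hk
    have hk1 : γ ≤ (k:ℝ) := le_trans hγ1 (by exact_mod_cast hk)
    set c : ℝ := 1 - γ / k with hc
    have hc0 : 0 ≤ c := by
      have : γ / k ≤ 1 := (div_le_one hk').mpr hk1
      simp [hc]; linarith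
    have key : ∀ t, F OPT - F (G (t+1)) ≤ c * (F OPT - F (G t)) := by
      intro t
      obtain ⟨a, ha, hmax⟩ := hgreedy t
      set S := G t with hS
      set T := OPT \ S with hT
      have hdisj : Disjoint S T := Finset.disjoint_sdiff
      have h1 := hwsub S T hdisj
      have hOT : OPT ⊆ S ∪ T := by
        intro x hx
        by_cases hxS : x ∈ S
        · exact Finset.mem_union.mpr (Or.inl hxS)
        · exact Finset.mem_union.mpr (Or.inr (Finset.mem_sdiff.mpr ⟨hx, hxS⟩))
      have h2 : F OPT ≤ F (S ∪ T) := hmono _ _ hOT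
      have hSsub : S ⊆ G (t+1) := by rw [ha]; exact Finset.subset_insert _ _
      have hSle : F S ≤ F (G (t+1)) := hmono _ _ hSsub
      have hgain : ∀ x ∈ T, F (S ∪ {x}) - F S ≤ F (G (t+1)) - F S := by
        intro x _
        have hx : F (insert x S) ≤ F (insert a S) := hmax x
        have : S ∪ {x} = insert x S := by
          rw [Finset.union_comm]; rfl
        rw [this, ha]; linarith
      have hsum : ∑ x ∈ T, (F (S ∪ {x}) - F S) ≤ T.card • (F (G (t+1)) - F S) :=
        Finset.sum_le_card_nsmul T _ _ hgain
      have hTk : (T.card : ℝ) ≤ k := by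
        have h3 : T.card ≤ OPT.card := Finset.card_le_card (Finset.sdiff_subset)
        exact_mod_cast le_trans h3 hOPT
      have hsum' : (T.card : ℝ) * (F (G (t+1)) - F S) ≤ (k:ℝ) * (F (G (t+1)) - F S) :=
        mul_le_mul_of_nonneg_right hTk (by linarith)
      have h5 : γ * (F OPT - F S) ≤ (k:ℝ) * (F (G (t+1)) - F S) := by
        have h4 : γ * (F OPT - F S) ≤ γ * (F (S ∪ T) - F S) := by nlinarith
        rw [nsmul_eq_mul] at hsum
        linarith
      have hq : γ / k * (F OPT - F S) ≤ F (G (t+1)) - F S := by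
        rw [div_mul_eq_mul_div, div_le_iff₀ hk']; linarith
      have hexp : c * (F OPT - F S) = (F OPT - F S) - γ / k * (F OPT - F S) := by
        rw [hc]; ring
      rw [hexp]; linarith
    have hiter : ∀ t, F OPT - F (G t) ≤ c ^ t * F OPT := by
      intro t
      induction t with
      | zero => simp [hG0, hempty]
      | succ n ih =>
        calc F OPT - F (G (n+1)) ≤ c * (F OPT - F (G n)) := key n
          _ ≤ c * (c ^ n * F OPT) := mul_le_mul_of_nonneg_left ih hc0
          _ = c ^ (n+1) * F OPT := by ring
    have hck : c ^ k ≤ Real.exp (-γ) := by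
      have h1 : c ≤ Real.exp (-(γ / k)) := by
        have := Real.add_one_le_exp (-(γ / k))
        simp [hc]; linarith
      calc c ^ k ≤ (Real.exp (-(γ / k))) ^ k := pow_le_pow_left₀ hc0 h1 k
        _ = Real.exp ((k:ℝ) * (-(γ / k))) := by rw [← Real.exp_nat_mul]
        _ = Real.exp (-γ) := by
            congr 1; field_simp
    have hfin : c ^ k * F OPT ≤ Real.exp (-γ) * F OPT :=
      mul_le_mul_of_nonneg_right hck hFOPT
    have h6 := hiter k
    have : (1 - Real.exp (-γ)) * F OPT = F OPT - Real.exp (-γ) * F OPT := by ring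
    rw [this]; linarith
end

section
/- Let F : Finset α → ℝ be monotone with F(∅)=0 and γ-weakly submodular. If in the greedy recursion each step guarantees F(G_{t+1}) - F(G_t) ≥ (γ/k)·(F(OPT) - F(G_t)), then by induction F(G_k) ≥ (1 - (1 - γ/k)^k)·F(OPT), and since (1 - γ/k)^k ≤ e^{-γ}, one obtains F(G_k) ≥ (1 - e^{-γ})·F(OPT). -/
theorem stmt3 (γ : ℝ) (hγ0 : 0 < γ) (hγ1 : γ ≤ 1) (k : ℕ) (hk : 1 ≤ k)
    (g : ℕ → ℝ) (opt : ℝ) (hopt : 0 ≤ opt) (hg0 : g 0 = 0)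
    (hstep : ∀ t : ℕ, t < k → (γ / k) * (opt - g t) ≤ g (t + 1) - g t) :
    (1 - (1 - γ / k) ^ k) * opt ≤ g k ∧ (1 - Real.exp (-γ)) * opt ≤ g k := by
  have hkpos : (0:ℝ) < k := by exact_mod_cast hk
  have hk1 : (1:ℝ) ≤ k := by exact_mod_cast hk
  have hrpos : 0 < γ / k := div_pos hγ0 hkpos
  have hr1 : γ / k ≤ 1 := by
    rw [div_le_one hkpos]; linarith
  have hbase : (0:ℝ) ≤ 1 - γ / k := by linarith
  have main : ∀ t : ℕ, t ≤ k → (1 - (1 - γ / k) ^ t) * opt ≤ g t := by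
    intro t
    induction t with
    | zero => intro _; simp [hg0]
    | succ n ih =>
      intro hle
      have hn : n < k := Nat.lt_of_succ_le hle
      have h1 := ih (le_of_lt hn)
      have h2 := hstep n hn
      have heq : (1 - (1 - γ / k) ^ (n+1)) * opt =
          (1 - γ / k) * ((1 - (1 - γ / k) ^ n) * opt) + (γ / k) * opt := by ring
      have h3 := mul_le_mul_of_nonneg_left h1 hbase
      nlinarith [h2, h3]
  refine ⟨main k le_rfl, ?_⟩
  have hexp : (1 - γ / k) ^ k ≤ Real.exp (-γ) := by
    have h1 : 1 - γ / k ≤ Real.exp (-(γ / k)) := by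
      have := Real.add_one_le_exp (-(γ / k)); linarith
    calc (1 - γ / k) ^ k ≤ Real.exp (-(γ / k)) ^ k :=
          pow_le_pow_left₀ hbase h1 k
      _ = Real.exp (-γ) := by
          rw [← Real.exp_nat_mul]
          congr 1
          field_simp
  have : (1 - Real.exp (-γ)) * opt ≤ (1 - (1 - γ / k) ^ k) * opt :=
    mul_le_mul_of_nonneg_right (by linarith) hopt
  linarith [main k le_rfl]
end
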